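/- arXiv:0811.2526 — 6 statements merged into one kernel-verified Lean document; each statement's English description precedes it below -/
import Mathlib

section
/- Suppose Σ has at least two distinct states. Then the closure operator λ is simple (λ(∅) = ∅ and λ({p}) = {p} for every p ∈ Σ) if and only if property (A) holds: for all p,q ∈ Σ, ξ(p) ⊆ ξ(q) implies p = q. -/
universe u v

/-- A state property system: states, a complete lattice of properties, and
the actuality map `xi` assigning to each state the set of actual properties. -/
structure SPS (σ : Type u) (L : Type v) [CompleteLattice L] where
  xi : σ → Set L
  top_mem : ∀ p, ⊤ ∈ xi p
  bot_not_mem : ∀ p, ⊥ ∉ xi p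
  sInf_mem : ∀ (p : σ) (A : Set L), (∀ a ∈ A, a ∈ xi p) ↔ sInf A ∈ xi p
  le_iff : ∀ a b : L, a ≤ b ↔ ∀ r, a ∈ xi r → b ∈ xi r

variable {σ : Type u} {L : Type v} [CompleteLattice L]

/-- λ{p,q} : the set of superpositions of the pair p, q. -/
def SPS.lamPair (S : SPS σ L) (p q : σ) : Set σ := {s | S.xi p ∩ S.xi q ⊆ S.xi s}

/-- A set is λ-closed if it contains λ{p,q} for each pair of its points. -/
def SPS.lamClosed (S : SPS σ L) (T : Set σ) : Prop :=
  ∀ p ∈ T, ∀ q ∈ T, S.lamPair p q ⊆ T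

/-- λ(P) : the intersection of all λ-closed sets containing P. -/
def SPS.lam (S : SPS σ L) (P : Set σ) : Set σ :=
  ⋂₀ {G | S.lamClosed G ∧ P ⊆ G}

/-- The set of superpositions of a set of states. -/
def SPS.bar (S : SPS σ L) (T : Set σ) : Set σ :=
  {p | (⋂ s ∈ T, S.xi s) ⊆ S.xi p}

/-- Property (A): at least two states and `xi` order-reflecting (injective). -/
def SPS.propA (S : SPS σ L) : Prop :=
  (∃ p q : σ, p ≠ q) ∧ ∀ p q : σ, S.xi p ⊆ S.xi q → p = q

/-- p is a minimal superposition of A. -/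
def SPS.minSup (S : SPS σ L) (A : Set σ) (p : σ) : Prop :=
  p ∈ S.bar A ∧ ∀ Q : Set σ, Q ⊂ A → p ∉ S.bar Q

/-- The minimal superposition principle for a given set A. -/
def SPS.MSPon (S : SPS σ L) (A : Set σ) : Prop :=
  ∀ p : σ, S.minSup A p →
    ∀ S₁ S₂ : Set σ, S₁ ⊂ A → S₂ ⊂ A → S₁ ∩ S₂ = ∅ → S₁ ∪ S₂ = A →
      (S.bar (S₁ ∪ {p}) ∩ S.bar S₂).Nonempty

/-- n-MSP : MSP for all sets of cardinality at most n. -/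
def SPS.nMSP (S : SPS σ L) (n : ℕ) : Prop :=
  ∀ A : Set σ, A.Finite → A.ncard ≤ n → S.MSPon A

/-- f-MSP : MSP for all finite sets. -/
def SPS.fMSP (S : SPS σ L) : Prop := ∀ A : Set σ, A.Finite → S.MSPon A

/-! A set is fixed by `λ` exactly when it is `λ`-closed. The empty set is `λ`-closed, and since
`λ{p,p} = {s | ξ(p) ⊆ ξ(s)}`, the singleton `{p}` is `λ`-closed exactly when `p` is the only
state whose properties include all of those of `p`. -/

namespace SPS

variable (S : SPS σ L)

theorem lamPair_self (p : σ) : S.lamPair p p = {s | S.xi p ⊆ S.xi s} := by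
  simp [lamPair]

theorem subset_lam (P : Set σ) : P ⊆ S.lam P :=
  fun _ hx _ hG => hG.2 hx

theorem lam_subset_of_lamClosed {P G : Set σ} (hG : S.lamClosed G) (hPG : P ⊆ G) :
    S.lam P ⊆ G :=
  Set.sInter_subset_of_mem ⟨hG, hPG⟩

theorem lamClosed_lam (P : Set σ) : S.lamClosed (S.lam P) :=
  fun _ ha _ hb _ hs _ hG => hG.1 _ (ha _ hG) _ (hb _ hG) hs

theorem lam_eq_self_iff {T : Set σ} : S.lam T = T ↔ S.lamClosed T :=
  ⟨fun h => h ▸ S.lamClosed_lam T,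
    fun h => (S.lam_subset_of_lamClosed h le_rfl).antisymm (S.subset_lam T)⟩

theorem lamClosed_empty : S.lamClosed ∅ :=
  fun _ h => absurd h (Set.notMem_empty _)

theorem lamClosed_singleton_iff (p : σ) :
    S.lamClosed {p} ↔ ∀ s, S.xi p ⊆ S.xi s → s = p := by
  simp [lamClosed, lamPair_self, Set.subset_def]

theorem lam_empty : S.lam ∅ = ∅ :=
  S.lam_eq_self_iff.2 S.lamClosed_empty

end SPS

theorem stmt2_general (S : SPS σ L) :
    (S.lam ∅ = ∅ ∧ ∀ p : σ, S.lam {p} = {p}) ↔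
      (∀ p q : σ, S.xi p ⊆ S.xi q → p = q) := by
  simp only [S.lam_empty, S.lam_eq_self_iff, S.lamClosed_singleton_iff, true_and]
  exact ⟨fun h p q hpq => (h p q hpq).symm, fun h p s hps => (h p s hps).symm⟩

theorem stmt2 (S : SPS σ L) (htwo : ∃ p q : σ, p ≠ q) :
    (S.lam ∅ = ∅ ∧ ∀ p : σ, S.lam {p} = {p}) ↔
      (∀ p q : σ, S.xi p ⊆ S.xi q → p = q) :=
  stmt2_general S
end

section
/- If a state property system satisfies property (A), then L(Σ), the set of λ-closed subsets of Σ, is a complete atomistic lattice, with meets given by intersections and joins given by S ∨ T = λ(S ∪ T); the atoms are exactly the singletons {p}, p ∈ Σ. -/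
universe u v

variable {σ : Type u} {L : Type v} [CompleteLattice L]

/-!
λ-closedness is preserved by arbitrary intersections, so `λ` is the closure operator of a Moore
family and all lattice operations come for free. Under (A) every singleton is λ-closed, since
`s ∈ λ{p,p}` means `ξ(p) ⊆ ξ(s)`, forcing `s = p`; hence singletons are the minimal nonempty
λ-closed sets.
-/

namespace SPS

variable (S : SPS σ L)

theorem lamClosed_sInter {𝒜 : Set (Set σ)} (h : ∀ T ∈ 𝒜, S.lamClosed T) :
    S.lamClosed (⋂₀ 𝒜) :=
  fun _ hp _ hq _ hs G hG => h G hG _ (hp G hG) _ (hq G hG) hs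

theorem lam_subset {P W : Set σ} (hW : S.lamClosed W) (hPW : P ⊆ W) : S.lam P ⊆ W :=
  Set.sInter_subset_of_mem ⟨hW, hPW⟩

theorem lam_eq_self {T : Set σ} (hT : S.lamClosed T) : S.lam T = T :=
  (S.lam_subset hT le_rfl).antisymm (S.subset_lam T)

theorem lamClosed_singleton (hinj : ∀ p q : σ, S.xi p ⊆ S.xi q → p = q) (p : σ) :
    S.lamClosed {p} := by
  rintro a ha b hb s hs
  rw [Set.mem_singleton_iff] at ha hb ⊢
  exact (hinj p s fun x hx => hs ⟨ha ▸ hx, hb ▸ hx⟩).symm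

theorem exists_eq_singleton_of_minimal (hinj : ∀ p q : σ, S.xi p ⊆ S.xi q → p = q)
    {T : Set σ} (hT : T.Nonempty)
    (hmin : ∀ U : Set σ, S.lamClosed U → U.Nonempty → U ⊆ T → U = T) : ∃ p : σ, T = {p} := by
  obtain ⟨p, hp⟩ := hT
  exact ⟨p, (hmin {p} (S.lamClosed_singleton hinj p) (Set.singleton_nonempty p)
    (Set.singleton_subset_iff.mpr hp)).symm⟩

end SPS

theorem stmt3 (S : SPS σ L) (hA : S.propA) :
    -- meets in L(Σ) are intersections
    (∀ 𝒜 : Set (Set σ), (∀ T ∈ 𝒜, S.lamClosed T) → S.lamClosed (⋂₀ 𝒜)) ∧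
    -- joins in L(Σ) are given by S ∨ T = λ(S ∪ T)
    (∀ T U : Set σ, S.lamClosed T → S.lamClosed U →
      S.lamClosed (S.lam (T ∪ U)) ∧ T ⊆ S.lam (T ∪ U) ∧ U ⊆ S.lam (T ∪ U) ∧
      ∀ W : Set σ, S.lamClosed W → T ⊆ W → U ⊆ W → S.lam (T ∪ U) ⊆ W) ∧
    -- the atoms are exactly the singletons
    (∀ p : σ, S.lamClosed ({p} : Set σ)) ∧
    (∀ T : Set σ, S.lamClosed T → T.Nonempty →
      (∀ U : Set σ, S.lamClosed U → U.Nonempty → U ⊆ T → U = T) → ∃ p : σ, T = {p}) ∧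
    -- atomisticity: every λ-closed set is the join of the singletons it contains
    (∀ T : Set σ, S.lamClosed T → T = S.lam (⋃ p ∈ T, ({p} : Set σ))) := by
  refine ⟨fun _ => S.lamClosed_sInter, fun T U _ _ => ?_, S.lamClosed_singleton hA.2,
    fun _ _ hT hmin => S.exists_eq_singleton_of_minimal hA.2 hT hmin,
    fun T hT => by rw [Set.biUnion_of_singleton, S.lam_eq_self hT]⟩
  have hunion := S.subset_lam (T ∪ U)
  exact ⟨S.lamClosed_lam _, Set.subset_union_left.trans hunion,
    Set.subset_union_right.trans hunion,
    fun _ hW hTW hUW => S.lam_subset hW (Set.union_subset hTW hUW)⟩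
end

section
/- If a state property system satisfies (A) and the 3-MSP, then the operator p*q := λ{p,q} makes (Σ, *) a projective geometry: (P1) p*p = {p}; (P2) p ∈ p*q; (P3) if p ∈ q*r, r ∈ s*t and p ≠ s, then (p*s) ∩ (q*t) ≠ ∅. -/
/-!
Since `T ↦ T̄` is a closure operator, `{p,q}⁻` is λ-closed, so `λ{p,q} = {p,q}⁻`; hence
`p ∈ λ{q,r}` and `r ∈ λ{s,t}` give `p ∈ {s,q,t}⁻`. Choose `Q ⊆ {s,q,t}`
minimal with `p ∈ Q̄`. If `s ∉ Q`, then `p` itself lies on both lines `λ{p,s}` and `λ{q,t}`.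
Otherwise `Q ≠ {s}` because `p ≠ s`, and the 3-MSP for the splitting `Q = {s} ∪ (Q \ {s})`
yields a point of `{s,p}⁻ ∩ (Q \ {s})⁻ ⊆ λ{p,s} ∩ λ{q,t}`.
-/

universe u v

variable {σ : Type u} {L : Type v} [CompleteLattice L]

namespace SPS

variable (S : SPS σ L)

lemma mem_bar {T : Set σ} {x : σ} : x ∈ S.bar T ↔ (⋂ s ∈ T, S.xi s) ⊆ S.xi x := Iff.rfl

lemma subset_bar (T : Set σ) : T ⊆ S.bar T :=
  fun _ hx => Set.biInter_subset_of_mem hx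

lemma bar_mono {T T' : Set σ} (h : T ⊆ T') : S.bar T ⊆ S.bar T' :=
  fun _ hx => (Set.biInter_subset_biInter_left h).trans hx

lemma bar_subset_bar_of_subset_bar {T T' : Set σ} (h : T ⊆ S.bar T') : S.bar T ⊆ S.bar T' :=
  fun _ hx => by
    refine subset_trans ?_ (S.mem_bar.1 hx)
    exact Set.subset_iInter₂ fun _ hs => S.mem_bar.1 (h hs)

lemma bar_singleton (hA : S.propA) (a : σ) : S.bar {a} = {a} := by
  ext x
  rw [mem_bar, Set.biInter_singleton, Set.mem_singleton_iff]
  exact ⟨fun h => (hA.2 a x h).symm, fun h => h ▸ subset_rfl⟩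

lemma bar_pair (p q : σ) : S.bar {p, q} = S.lamPair p q := by
  ext x
  rw [mem_bar, Set.biInter_insert, Set.biInter_singleton]
  rfl

lemma lam_pair (p q : σ) : S.lam {p, q} = S.bar {p, q} := by
  have hclosed : S.lamClosed (S.bar {p, q}) := fun _ ha _ hb _ hx =>
    S.bar_subset_bar_of_subset_bar (Set.pair_subset ha hb) (S.bar_pair _ _ ▸ hx)
  refine subset_antisymm (Set.sInter_subset_of_mem ⟨hclosed, S.subset_bar _⟩) ?_
  rintro x hx G ⟨hG, hpq⟩
  exact hG p (hpq (by simp)) q (hpq (by simp)) (S.bar_pair p q ▸ hx)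

lemma exists_minSup_subset {A : Set σ} (hfin : A.Finite) {p : σ} (hp : p ∈ S.bar A) :
    ∃ Q ⊆ A, S.minSup Q p := by
  let C : Set (Set σ) := {Q | Q ⊆ A ∧ p ∈ S.bar Q}
  have hC : C.Finite := hfin.finite_subsets.subset fun _ hQ => hQ.1
  obtain ⟨Q, hmin⟩ := hC.exists_minimal ⟨A, subset_rfl, hp⟩
  exact ⟨Q, hmin.prop.1, hmin.prop.2, fun Q' hQ' hpQ' =>
    hmin.not_prop_of_lt hQ' ⟨hQ'.subset.trans hmin.prop.1, hpQ'⟩⟩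

variable {S}

lemma MSPon.bar_pair_inter_bar_diff_nonempty {Q : Set σ} (hQ : S.MSPon Q) {p a : σ}
    (hp : S.minSup Q p) (ha : a ∈ Q) (hQa : Q ≠ {a}) :
    (S.bar {a, p} ∩ S.bar (Q \ {a})).Nonempty := by
  have ha' : {a} ⊆ Q := Set.singleton_subset_iff.2 ha
  simpa only [Set.singleton_union] using hQ p hp {a} (Q \ {a})
    (Set.ssubset_iff_subset_ne.2 ⟨ha', hQa.symm⟩) (Set.sdiff_singleton_ssubset.2 ha)
    (Set.inter_sdiff_self _ _) (Set.union_sdiff_cancel ha')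

lemma nMSP.MSPon_of_subset {n : ℕ} (h : S.nMSP n) {A Q : Set σ} (hfin : A.Finite)
    (hcard : A.ncard ≤ n) (hQA : Q ⊆ A) : S.MSPon Q :=
  h Q (hfin.subset hQA) ((Set.ncard_le_ncard hQA hfin).trans hcard)

end SPS

theorem stmt5 (S : SPS σ L) (hA : S.propA) (h3 : S.nMSP 3) :
    -- (P1)
    (∀ p : σ, S.lam {p, p} = {p}) ∧
    -- (P2)
    (∀ p q : σ, p ∈ S.lam {p, q}) ∧
    -- (P3)
    (∀ p q r s t : σ, p ∈ S.lam {q, r} → r ∈ S.lam {s, t} → p ≠ s →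
      (S.lam {p, s} ∩ S.lam {q, t}).Nonempty) := by
  refine ⟨fun p => ?_, fun p q => ?_, fun p q r s t hp hr hps => ?_⟩
  · rw [S.lam_pair, Set.pair_eq_singleton, S.bar_singleton hA]
  · exact S.lam_pair p q ▸ S.subset_bar _ (Set.mem_insert p {q})
  simp only [S.lam_pair] at hp hr ⊢
  have hpA : p ∈ S.bar {s, q, t} := by
    refine S.bar_subset_bar_of_subset_bar (Set.pair_subset ?_ ?_) hp
    · exact S.subset_bar _ (by simp)
    · exact S.bar_mono (Set.insert_subset_insert (Set.subset_insert q {t})) hr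
  obtain ⟨Q, hQA, hQp⟩ := S.exists_minSup_subset (Set.toFinite _) hpA
  have hQqt : Q \ {s} ⊆ {q, t} := Set.sdiff_singleton_subset_iff.2 hQA
  by_cases hsQ : s ∈ Q
  · have hQs : Q ≠ {s} := by
      rintro rfl
      exact hps ((S.bar_singleton hA s).subset hQp.1)
    have hcard : ({s, q, t} : Set σ).ncard ≤ 3 :=
      (Set.ncard_insert_le _ _).trans (Nat.succ_le_succ ((Set.ncard_insert_le _ _).trans (by simp)))
    obtain ⟨x, hxps, hxqt⟩ := (h3.MSPon_of_subset (Set.toFinite _) hcard hQA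
      ).bar_pair_inter_bar_diff_nonempty hQp hsQ hQs
    exact ⟨x, Set.pair_comm s p ▸ hxps, S.bar_mono hQqt hxqt⟩
  · rw [← Set.sdiff_singleton_eq_self hsQ] at hQp
    exact ⟨p, S.subset_bar _ (Set.mem_insert p {s}), S.bar_mono hQqt hQp.1⟩
end

section
/- If (A) holds, then for each p ∈ Σ the element a_p := ⋀{a : a ∈ ξ(p)} is an atom of L, the elements a_p (p ∈ Σ) are exactly the atoms of L, and a ∈ ξ(p) iff a_p ≤ a. -/
universe u v

variable {σ : Type u} {L : Type v} [CompleteLattice L]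

/-- The atom associated to a state: the smallest actual property. -/
def atomOf (S : SPS σ L) (p : σ) : L := sInf (S.xi p)

/-! Since `ξ(p)` is closed under meets, it is the principal filter of `a_p = ⋀ ξ(p)`, so
`ξ(p) ⊆ ξ(q)` iff `a_q ≤ a_p`. A nonzero `b < a_p` lies in some `ξ(r)`, giving `a_r ≤ b < a_p`,
hence `ξ(p) ⊆ ξ(r)`, and (A) forces `r = p`, a contradiction. -/

namespace SPS

variable (S : SPS σ L)

theorem atomOf_mem (p : σ) : atomOf S p ∈ S.xi p :=
  (S.sInf_mem p (S.xi p)).mp fun _ ha => ha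

theorem mem_xi_iff_atomOf_le (p : σ) (a : L) : a ∈ S.xi p ↔ atomOf S p ≤ a :=
  ⟨fun h => sInf_le h, fun h => (S.le_iff _ a).mp h p (S.atomOf_mem p)⟩

theorem xi_subset_xi_iff (p q : σ) : S.xi p ⊆ S.xi q ↔ atomOf S q ≤ atomOf S p := by
  simp only [Set.subset_def, S.mem_xi_iff_atomOf_le]
  exact ⟨fun h => h _ le_rfl, fun h _ ha => h.trans ha⟩

theorem atomOf_ne_bot (p : σ) : atomOf S p ≠ ⊥ := fun h =>
  S.bot_not_mem p (h ▸ S.atomOf_mem p)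

theorem exists_mem_xi_of_ne_bot {a : L} (ha : a ≠ ⊥) : ∃ r, a ∈ S.xi r := by
  by_contra! h
  exact ha (le_bot_iff.mp ((S.le_iff a ⊥).mpr fun r hr => absurd hr (h r)))

theorem exists_atomOf_le_of_ne_bot {a : L} (ha : a ≠ ⊥) : ∃ r, atomOf S r ≤ a := by
  obtain ⟨r, hr⟩ := S.exists_mem_xi_of_ne_bot ha
  exact ⟨r, (S.mem_xi_iff_atomOf_le r a).mp hr⟩

theorem isAtom_atomOf (hinj : ∀ p q : σ, S.xi p ⊆ S.xi q → p = q) (p : σ) :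
    IsAtom (atomOf S p) := by
  refine ⟨S.atomOf_ne_bot p, fun b hb => ?_⟩
  by_contra hb_ne
  obtain ⟨r, hrb⟩ := S.exists_atomOf_le_of_ne_bot hb_ne
  have hpr : p = r := hinj p r ((S.xi_subset_xi_iff p r).mpr (hrb.trans hb.le))
  exact (hrb.trans_lt hb).ne (congrArg (atomOf S) hpr).symm

theorem exists_eq_atomOf_of_isAtom {a : L} (ha : IsAtom a) : ∃ p, a = atomOf S p := by
  obtain ⟨r, hr⟩ := S.exists_atomOf_le_of_ne_bot ha.1
  exact ⟨r, ((ha.le_iff_eq (S.atomOf_ne_bot r)).mp hr).symm⟩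

end SPS

theorem stmt11 (S : SPS σ L) (hA : S.propA) :
    (∀ p : σ, IsAtom (atomOf S p)) ∧
    (∀ a : L, IsAtom a → ∃ p : σ, a = atomOf S p) ∧
    (∀ p : σ, ∀ a : L, a ∈ S.xi p ↔ atomOf S p ≤ a) :=
  ⟨S.isAtom_atomOf hA.2, fun _ => S.exists_eq_atomOf_of_isAtom, S.mem_xi_iff_atomOf_le⟩
end

section
/- If (A) and (B) hold, then for any subset T ⊆ Σ, T'' = T̄⁰, where T' is the orthocomplement in Σ and T̄⁰ the set of superpositions relative to L₀. -/
universe u v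

variable {σ : Type u} {L : Type v} [CompleteLattice L]

/-- Probability structure on a subset `L0` of the property lattice:
`mu p a` is the probability of property `a` in state `p`, satisfying (Oi)-(Oiii). -/
structure ProbStruct (S : SPS σ L) (L0 : Set L) where
  bot_mem : (⊥ : L) ∈ L0
  top_mem : (⊤ : L) ∈ L0
  mu : σ → L → ℝ
  nonneg : ∀ p, ∀ a ∈ L0, 0 ≤ mu p a
  le_one : ∀ p, ∀ a ∈ L0, mu p a ≤ 1
  Oi : ∀ p, ∀ a ∈ L0, (mu p a = 1 ↔ a ∈ S.xi p)
  Oii : ∀ p, ∀ a ∈ L0, ∀ b ∈ L0, a ≤ b → mu p a ≤ mu p b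
  Oiii : ∀ a : ℕ → L, (∀ i, a i ∈ L0) →
    (∀ i j, i ≠ j → ∀ p, mu p (a i) + mu p (a j) ≤ 1) →
    ∃ b ∈ L0, ∀ p, HasSum (fun i => mu p (a i)) (1 - mu p b)

/-- `oc` is the orthocomplementation on `L0` associated with the probability structure. -/
def ocProp (S : SPS σ L) (L0 : Set L) (P : ProbStruct S L0) (oc : L → L) : Prop :=
  ∀ a ∈ L0, oc a ∈ L0 ∧ ∀ p, P.mu p a + P.mu p (oc a) = 1

/-- Orthogonality of states: p ⊥ q iff some a ∈ L0 is actual in p with a' actual in q. -/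
def statePerp (S : SPS σ L) (L0 : Set L) (oc : L → L) (p q : σ) : Prop :=
  ∃ a ∈ L0, a ∈ S.xi p ∧ oc a ∈ S.xi q

/-- T' : the set of states orthogonal to every state of T. -/
def setPerp (S : SPS σ L) (L0 : Set L) (oc : L → L) (T : Set σ) : Set σ :=
  {p | ∀ t ∈ T, statePerp S L0 oc p t}

/-- Superpositions relative to L0. -/
def bar0 (S : SPS σ L) (L0 : Set L) (T : Set σ) : Set σ :=
  {s | ∀ a ∈ L0, (∀ t ∈ T, a ∈ S.xi t) → a ∈ S.xi s}

/-!
Since the atom of a state `p` lies in `L₀`, orthogonality `p ⊥ q` is equivalent to the single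
property `(a_p)'` being actual in `q`: any witness `a` of `p ⊥ q` lies above `a_p`, so
`μ q a_p ≤ μ q a = 0`. Hence `T'` is exactly the set of states `p` with `(a_p)'` actual on all of
`T`. This gives `T̄⁰ ⊆ T''` at once. Conversely, for `s ∈ T''` and `a ∈ L₀` actual on `T`, every
state in which `a'` is actual belongs to `T'`, hence is orthogonal to `s`; so `a' ≤ (a_s)'`, and
`μ s a' ≤ μ s (a_s)' = 0` forces `a` to be actual in `s`.
-/

theorem atomOf_mem_xi (S : SPS σ L) (s : σ) : atomOf S s ∈ S.xi s :=
  (S.sInf_mem s (S.xi s)).mp fun _ ha => ha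

namespace ProbStruct

variable {S : SPS σ L} {L0 : Set L}

theorem mu_eq_zero_of_le (P : ProbStruct S L0) {p : σ} {a b : L} (ha : a ∈ L0) (hb : b ∈ L0)
    (hab : a ≤ b) (h : P.mu p b = 0) : P.mu p a = 0 :=
  le_antisymm (h ▸ P.Oii p a ha b hb hab) (P.nonneg p a ha)

end ProbStruct

namespace ocProp

variable {S : SPS σ L} {L0 : Set L} {P : ProbStruct S L0} {oc : L → L}

theorem mu_oc (hoc : ocProp S L0 P oc) (p : σ) {a : L} (ha : a ∈ L0) :
    P.mu p (oc a) = 1 - P.mu p a := by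
  linarith [(hoc a ha).2 p]

theorem oc_mem_xi_iff (hoc : ocProp S L0 P oc) {p : σ} {a : L} (ha : a ∈ L0) :
    oc a ∈ S.xi p ↔ P.mu p a = 0 := by
  rw [← P.Oi p (oc a) (hoc a ha).1, hoc.mu_oc p ha, sub_eq_self]

theorem mu_oc_eq_zero_iff (hoc : ocProp S L0 P oc) {p : σ} {a : L} (ha : a ∈ L0) :
    P.mu p (oc a) = 0 ↔ a ∈ S.xi p := by
  rw [← P.Oi p a ha, hoc.mu_oc p ha, sub_eq_zero, eq_comm]

theorem statePerp_iff_oc_atomOf_mem (hoc : ocProp S L0 P oc) {p q : σ}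
    (hp : atomOf S p ∈ L0) : statePerp S L0 oc p q ↔ oc (atomOf S p) ∈ S.xi q := by
  refine ⟨fun ⟨a, ha, hap, haq⟩ => ?_, fun h => ⟨atomOf S p, hp, atomOf_mem_xi S p, h⟩⟩
  rw [hoc.oc_mem_xi_iff hp]
  exact P.mu_eq_zero_of_le hp ha (sInf_le hap) ((hoc.oc_mem_xi_iff ha).mp haq)

theorem statePerp_of_oc_mem_of_mem (hoc : ocProp S L0 P oc) {p q : σ} {a : L}
    (hp : atomOf S p ∈ L0) (ha : a ∈ L0) (hap : oc a ∈ S.xi p) (haq : a ∈ S.xi q) :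
    statePerp S L0 oc p q := by
  rw [hoc.statePerp_iff_oc_atomOf_mem hp, hoc.oc_mem_xi_iff hp]
  exact P.mu_eq_zero_of_le hp (hoc a ha).1 (sInf_le hap) ((hoc.mu_oc_eq_zero_iff ha).mpr haq)

theorem bar0_subset_setPerp_setPerp (hoc : ocProp S L0 P oc)
    (hB : ∀ s : σ, atomOf S s ∈ L0) (T : Set σ) :
    bar0 S L0 T ⊆ setPerp S L0 oc (setPerp S L0 oc T) := by
  intro s hs p hp
  have hocp : oc (atomOf S p) ∈ S.xi s :=
    hs _ (hoc _ (hB p)).1 fun t ht => (hoc.statePerp_iff_oc_atomOf_mem (hB p)).mp (hp t ht)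
  exact hoc.statePerp_of_oc_mem_of_mem (hB s) (hB p) hocp (atomOf_mem_xi S p)

theorem setPerp_setPerp_subset_bar0 (hoc : ocProp S L0 P oc)
    (hB : ∀ s : σ, atomOf S s ∈ L0) (T : Set σ) :
    setPerp S L0 oc (setPerp S L0 oc T) ⊆ bar0 S L0 T := by
  intro s hs a ha haT
  have hle : oc a ≤ oc (atomOf S s) := by
    refine (S.le_iff _ _).mpr fun p hap => ?_
    have hpT : p ∈ setPerp S L0 oc T := fun t ht =>
      hoc.statePerp_of_oc_mem_of_mem (hB p) ha hap (haT t ht)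
    exact (hoc.statePerp_iff_oc_atomOf_mem (hB s)).mp (hs p hpT)
  have hs_atom : P.mu s (oc (atomOf S s)) = 0 :=
    (hoc.mu_oc_eq_zero_iff (hB s)).mpr (atomOf_mem_xi S s)
  exact (hoc.mu_oc_eq_zero_iff ha).mp
    (P.mu_eq_zero_of_le (hoc a ha).1 (hoc _ (hB s)).1 hle hs_atom)

end ocProp

theorem stmt14_general (S : SPS σ L) (L0 : Set L) (P : ProbStruct S L0)
    (oc : L → L) (hoc : ocProp S L0 P oc)
    (hB : ∀ s : σ, atomOf S s ∈ L0) :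
    ∀ T : Set σ, setPerp S L0 oc (setPerp S L0 oc T) = bar0 S L0 T := fun T =>
  (hoc.setPerp_setPerp_subset_bar0 hB T).antisymm (hoc.bar0_subset_setPerp_setPerp hB T)

theorem stmt14 (S : SPS σ L) (L0 : Set L) (P : ProbStruct S L0)
    (oc : L → L) (hoc : ocProp S L0 P oc)
    (hA : S.propA)
    (hB : ∀ s : σ, atomOf S s ∈ L0) :
    ∀ T : Set σ, setPerp S L0 oc (setPerp S L0 oc T) = bar0 S L0 T :=
  stmt14_general S L0 P oc hoc hB
end

section
/- For any state property system and any a ∈ L, the Cartan image κ(a) = {p ∈ Σ : a ∈ ξ(p)} is closed under superposition, i.e. κ(a) ∈ F(Σ); moreover, under (A), κ restricts to an isomorphism of complete atomistic lattices between κ(L) and F(Σ), with κ(a) a singleton whenever a is an atom. -/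
universe u v

variable {σ : Type u} {L : Type v} [CompleteLattice L]

/-- The Cartan map. -/
def SPS.kappa (S : SPS σ L) (a : L) : Set σ := {p | a ∈ S.xi p}


/-!
Every closed set `T = T̄` is the Cartan image of the meet of the properties common to its states,
`κ(⋀ ⋂_{s ∈ T} ξ(s)) = T̄`, so `κ(L)` and `F(Σ)` are literally the same family of sets.
If `a` is an atom and `a ∈ ξ(q)`, then the strongest actual property `⋀ ξ(q)` of `q` lies below `a`
and is not `⊥`, hence equals `a`; so `ξ(q) ⊆ ξ(p)` for every `p ∈ κ(a)`, and (A) forces `p = q`.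
-/

namespace SPS

variable (S : SPS σ L)

theorem mem_kappa_sInf_iff {A : Set L} {p : σ} : p ∈ S.kappa (sInf A) ↔ A ⊆ S.xi p :=
  (S.sInf_mem p A).symm

theorem kappa_sInf_iInter_xi (T : Set σ) : S.kappa (sInf (⋂ s ∈ T, S.xi s)) = S.bar T := by
  ext p
  exact S.mem_kappa_sInf_iff

theorem bar_kappa (a : L) : S.bar (S.kappa a) = S.kappa a := by
  ext p
  refine ⟨fun hp => hp (Set.mem_iInter₂.mpr fun _ hs => hs), fun hp _ hb => ?_⟩
  exact Set.mem_iInter₂.mp hb p hp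

theorem range_kappa : Set.range S.kappa = {T : Set σ | S.bar T = T} := by
  ext T
  refine ⟨?_, fun hT => ⟨_, (S.kappa_sInf_iInter_xi T).trans hT⟩⟩
  rintro ⟨a, rfl⟩
  exact S.bar_kappa a

theorem sInf_xi_mem (p : σ) : sInf (S.xi p) ∈ S.xi p :=
  S.mem_kappa_sInf_iff.mpr subset_rfl

theorem kappa_nonempty {a : L} (ha : a ≠ ⊥) : (S.kappa a).Nonempty := by
  by_contra hempty
  exact ha (le_bot_iff.mp ((S.le_iff a ⊥).mpr fun r hr => (hempty ⟨r, hr⟩).elim))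

theorem sInf_xi_eq_of_isAtom {a : L} (ha : IsAtom a) {q : σ} (hq : a ∈ S.xi q) :
    sInf (S.xi q) = a := by
  refine (eq_or_lt_of_le (sInf_le hq)).resolve_right fun hlt => ?_
  exact S.bot_not_mem q (ha.2 _ hlt ▸ S.sInf_xi_mem q)

theorem xi_subset_of_isAtom {a : L} (ha : IsAtom a) {p q : σ} (hp : a ∈ S.xi p)
    (hq : a ∈ S.xi q) : S.xi q ⊆ S.xi p := fun b hb =>
  (S.le_iff a b).mp (S.sInf_xi_eq_of_isAtom ha hq ▸ sInf_le hb) p hp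

theorem kappa_eq_singleton_of_isAtom (hinj : ∀ p q : σ, S.xi p ⊆ S.xi q → p = q) {a : L}
    (ha : IsAtom a) : ∃ p : σ, S.kappa a = {p} := by
  obtain ⟨p, hp⟩ := S.kappa_nonempty ha.1
  refine ⟨p, Set.eq_singleton_iff_unique_mem.mpr ⟨hp, fun q (hq : a ∈ S.xi q) => ?_⟩⟩
  exact hinj q p (S.xi_subset_of_isAtom ha hp hq)

end SPS

theorem stmt16 (S : SPS σ L) :
    -- κ(a) is closed under superpositions
    (∀ a : L, S.bar (S.kappa a) = S.kappa a) ∧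
    (S.propA →
      -- κ(L) and F(Σ) are isomorphic as complete (atomistic) lattices
      Nonempty ((Set.range S.kappa : Set (Set σ)) ≃o
        ({T : Set σ | S.bar T = T} : Set (Set σ))) ∧
      -- κ of an atom is a singleton
      (∀ a : L, IsAtom a → ∃ p : σ, S.kappa a = {p})) :=
  ⟨S.bar_kappa, fun hA =>
    ⟨⟨OrderIso.setCongr _ _ S.range_kappa⟩, fun _ => S.kappa_eq_singleton_of_isAtom hA.2⟩⟩
end
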